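/- Let k be an integer with k ≤ σ − 2. If the auxiliary graph G* is (k+2)-vertex-connected and, for every monitor m ∈ M, the auxiliary graph G_m is (k+1)-vertex-connected, then G is k-identifiable under CSP. -/

import Mathlib

open SimpleGraph

/-- A measurement path in `G`: a walk together with its two endpoints. -/
abbrev MWalk {V : Type*} (G : SimpleGraph V) := Σ u : V, Σ v : V, G.Walk u v

/-- A measurement path traverses a node `x` iff `x` lies on the walk. -/
def Traverses {V : Type*} {G : SimpleGraph V} (p : MWalk G) (x : V) : Prop :=
  x ∈ p.2.2.support

/-- Two failure sets `F`, `F'` are distinguishable w.r.t. the collection `P` of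
measurement paths: some path of `P` traverses a node of one set but no node of
the other. -/
def Distinguishable {V : Type*} {G : SimpleGraph V} (P : Set (MWalk G))
    (F F' : Set V) : Prop :=
  (∃ p ∈ P, (∃ x ∈ F, Traverses p x) ∧ ∀ x ∈ F', ¬ Traverses p x) ∨
  (∃ p ∈ P, (∃ x ∈ F', Traverses p x) ∧ ∀ x ∈ F, ¬ Traverses p x)

/-- `k`-identifiability w.r.t. paths `P`, where failure sets range over subsets
of the non-monitor set `Nm`. -/
def Identifiable {V : Type*} {G : SimpleGraph V} (P : Set (MWalk G))
    (Nm : Set V) (k : ℕ) : Prop :=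
  ∀ F F' : Set V, F ⊆ Nm → F' ⊆ Nm → F.ncard ≤ k → F'.ncard ≤ k → F ≠ F' →
    Distinguishable P F F'

/-- CAP measurement paths: all walks whose two endpoints are monitors
(endpoints may coincide, nodes may be revisited). -/
def CAP {V : Type*} (G : SimpleGraph V) (M : Set V) : Set (MWalk G) :=
  { p | p.1 ∈ M ∧ p.2.1 ∈ M }

/-- CSP measurement paths: all simple (cycle-free) paths whose two endpoints
are distinct monitors. -/
def CSP {V : Type*} (G : SimpleGraph V) (M : Set V) : Set (MWalk G) :=
  { p | p.1 ∈ M ∧ p.2.1 ∈ M ∧ p.1 ≠ p.2.1 ∧ p.2.2.IsPath }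

/-- Every connected component of `G − V'` contains at least one monitor. -/
def ComponentsHaveMonitor {V : Type*} (G : SimpleGraph V) (M : Set V)
    (V' : Set V) : Prop :=
  ∀ v : ↥(V'ᶜ), ∃ m : ↥(V'ᶜ), (m : V) ∈ M ∧ (G.induce V'ᶜ).Reachable v m

/-- The auxiliary graph on the non-monitors `Nm` plus a new virtual monitor
`m'` (the vertex `none`), where the monitors in `M'` are used to create the
virtual links: edges of `G` between non-monitors are kept; `m'` is joined to
each non-monitor adjacent in `G` to some monitor in `M'`; and two non-monitors
each adjacent in `G` to some monitor in `M'` are joined.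
`G* = StarGraph G Mᶜ M` and `G_m = StarGraph G Mᶜ (M \ {m})`. -/
def StarGraph {V : Type*} (G : SimpleGraph V) (Nm M' : Set V) :
    SimpleGraph (Option ↥Nm) where
  Adj x y :=
    match x, y with
    | none, none => False
    | none, some u => ∃ m ∈ M', G.Adj (u : V) m
    | some u, none => ∃ m ∈ M', G.Adj (u : V) m
    | some u, some w => (u : V) ≠ (w : V) ∧
        (G.Adj (u : V) (w : V) ∨
          ((∃ m ∈ M', G.Adj (u : V) m) ∧ ∃ m ∈ M', G.Adj (w : V) m))
  symm := ⟨by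
    rintro (_ | u) (_ | w) h
    · exact h
    · exact h
    · exact h
    · exact ⟨fun e => h.1 e.symm, h.2.imp (fun hh => hh.symm) fun hh => ⟨hh.2, hh.1⟩⟩⟩
  loopless := ⟨by
    rintro (_ | u) h
    · exact h
    · exact h.1 rfl⟩

/-- A graph `H` is `k`-vertex-connected: it has more than `k` vertices and
removing fewer than `k` vertices leaves it connected. -/
def KConnected {W : Type*} (H : SimpleGraph W) (k : ℕ) : Prop :=
  k < Nat.card W ∧ ∀ S : Set W, S.ncard < k → (H.induce Sᶜ).Connected

/-- The vertex connectivity `δ(H)`: the largest `k` such that `H` is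
`k`-vertex-connected. -/
noncomputable def vertexConnectivity {W : Type*} (H : SimpleGraph W) : ℕ :=
  sSup { k | KConnected H k }

/-- The maximum identifiability: the largest `k ∈ {0, …, |Nm|}` such that the
network is `k`-identifiable w.r.t. `P`. -/
noncomputable def maxIdent {V : Type*} {G : SimpleGraph V} (P : Set (MWalk G))
    (Nm : Set V) : ℕ :=
  sSup { k | k ≤ Nm.ncard ∧ Identifiable P Nm k }

/-- `MSC(v)`: the minimum cardinality of a set `V' ⊆ Nm \ {v}` of non-monitors
such that every path of `P` traversing `v` traverses some node of `V'`
(`⊤ = ∞` if no such set exists). -/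
noncomputable def MSC {V : Type*} {G : SimpleGraph V} (P : Set (MWalk G))
    (Nm : Set V) (v : V) : ℕ∞ :=
  sInf { n : ℕ∞ | ∃ V' : Set V, V' ⊆ Nm \ {v} ∧
    (∀ p ∈ P, Traverses p v → ∃ x ∈ V', Traverses p x) ∧ n = (V'.ncard : ℕ∞) }

/-!
Fix a failure set `D` with `|D| ≤ k` and a non-monitor `v ∉ D`; it suffices to find a CSP path
through `v` avoiding `D`. Deleting `D` from `G*` leaves a 2-connected graph, so by Whitney's
theorem there are two internally disjoint paths from `v` to the virtual monitor. Cut at their first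
vertices adjacent to a monitor, they become two legs in `G` of a fork at `v` ending next to monitors
`m₁` and `m₂`; if `m₁ ≠ m₂` the fork is the required path. Otherwise `G_{m₁} − D` is connected,
which yields a path from `v` to a vertex next to another monitor, and rerouting one leg along it
produces a fork with distinct monitors.
-/

namespace SimpleGraph

variable {W : Type*} {H : SimpleGraph W}

namespace Walk

lemma IsPath.append {a x b : W} {p : H.Walk a x} {q : H.Walk x b} (hp : p.IsPath)
    (hq : q.IsPath) (hpq : ∀ y ∈ p.support, y ∈ q.support → y = x) :
    (p.append q).IsPath := by
  have hq' := hq.support_nodup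
  rw [← cons_tail_support] at hq'
  rw [isPath_def, support_append, List.nodup_append]
  refine ⟨hp.support_nodup, hq'.of_cons, ?_⟩
  rintro y hyp _ hyq rfl
  obtain rfl := hpq y hyp (List.mem_of_mem_tail hyq)
  exact (List.nodup_cons.mp hq').1 hyq

lemma IsPath.start_notMem_support_dropUntil [DecidableEq W] {u v x : W} {p : H.Walk u v}
    (hp : p.IsPath) (hx : x ∈ p.support) (hxu : x ≠ u) : u ∉ (p.dropUntil x hx).support :=
  fun hu => (IsPath.ne_of_mem_support_of_append (by rwa [p.take_spec hx]) hxu.symm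
    (start_mem_support _) hu) rfl

lemma exists_isPath_to_first_mem {S : Set W} {c v : W} (q : H.Walk c v) (hv : v ∈ S) :
    ∃ x ∈ S, ∃ p : H.Walk c x, p.IsPath ∧ (∀ y ∈ p.support, y ∈ q.support) ∧
      ∀ y ∈ p.support, y ∈ S → y = x := by
  classical
  suffices ∃ x ∈ S, ∃ p : H.Walk c x, (∀ y ∈ p.support, y ∈ q.support) ∧
      ∀ y ∈ p.support, y ∈ S → y = x by
    obtain ⟨x, hx, p, hpq, hpS⟩ := this
    exact ⟨x, hx, p.bypass, p.bypass_isPath,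
      fun y hy => hpq y (p.support_bypass_subset_support hy),
      fun y hy => hpS y (p.support_bypass_subset_support hy)⟩
  induction q with
  | nil => exact ⟨_, hv, nil, by simp, by simp⟩
  | @cons c _ _ h q ih =>
    by_cases hc : c ∈ S
    · exact ⟨c, hc, nil, by simp, by simp⟩
    · obtain ⟨x, hx, p, hpq, hpS⟩ := ih hv
      refine ⟨x, hx, cons h p, ?_, ?_⟩ <;> simp only [support_cons, List.mem_cons]
      · rintro y (rfl | hy)
        exacts [Or.inl rfl, Or.inr (hpq y hy)]
      · rintro y (rfl | hy) hyS
        exacts [absurd hyS hc, hpS y hy hyS]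

end Walk

def PathConnectedIn (H : SimpleGraph W) (A : Set W) : Prop :=
  ∀ u ∈ A, ∀ w ∈ A, ∃ p : H.Walk u w, p.IsPath ∧ ∀ y ∈ p.support, y ∈ A

def TwoDisjointPathsIn (H : SimpleGraph W) (A : Set W) (a b : W) : Prop :=
  ∃ p q : H.Walk a b, p.IsPath ∧ q.IsPath ∧ (∀ y ∈ p.support, y ∈ A) ∧
    (∀ y ∈ q.support, y ∈ A) ∧ ∀ y ∈ p.support, y ∈ q.support → y = a ∨ y = b

lemma KConnected.pathConnectedIn_compl {k : ℕ} (h : KConnected H k) {S : Set W}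
    (hS : S.ncard < k) : PathConnectedIn H Sᶜ := by
  classical
  intro u hu w hw
  obtain ⟨q⟩ := (h.2 S hS).preconnected ⟨u, hu⟩ ⟨w, hw⟩
  let r := q.map (Embedding.induce Sᶜ).toHom
  refine ⟨r.bypass, r.bypass_isPath, fun y hy => ?_⟩
  have hy' := r.support_bypass_subset_support hy
  simp only [r, Walk.support_map, List.mem_map] at hy'
  obtain ⟨y', -, rfl⟩ := hy'
  exact y'.2

section Whitney

variable {A : Set W}

/-- Besides the edge `ab`, take the first edge `ad` of an `a`-`c` path avoiding `b`, for a third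
vertex `c`, followed by a `d`-`b` path avoiding `a`. -/
lemma TwoDisjointPathsIn.of_adj (hA : ∀ x, PathConnectedIn H (A \ {x}))
    (h3 : ∀ a b, (A \ {a, b}).Nonempty) {a b : W} (ha : a ∈ A) (hb : b ∈ A)
    (hab : H.Adj a b) : TwoDisjointPathsIn H A a b := by
  obtain ⟨c, hcA, hc⟩ := h3 a b
  simp only [Set.mem_insert_iff, Set.mem_singleton_iff, not_or] at hc
  obtain ⟨r, -, hr⟩ := hA b a ⟨ha, hab.ne⟩ c ⟨hcA, hc.2⟩
  cases r with
  | nil => exact absurd rfl hc.1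
  | @cons _ d _ had r =>
    obtain ⟨hdA, hdb⟩ := hr d (by simp)
    obtain ⟨s, hs, hsA⟩ := hA a d ⟨hdA, had.ne'⟩ b ⟨hb, hab.ne'⟩
    refine ⟨hab.toWalk, .cons had s, .of_adj hab, hs.cons fun has => (hsA a has).2 rfl,
      ?_, ?_, ?_⟩
    · simp [ha, hb]
    · simp only [Walk.support_cons, List.mem_cons]
      rintro y (rfl | hy)
      exacts [ha, (hsA y hy).1]
    · simp

/-- The inductive step of Whitney's theorem: reroute along an `a`-`b` path avoiding `w`. -/
lemma TwoDisjointPathsIn.cons (hA : ∀ x, PathConnectedIn H (A \ {x})) {a w b : W}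
    (hw : TwoDisjointPathsIn H A w b) (ha : a ∈ A) (haw : H.Adj a w) (hab : a ≠ b)
    (hwb : w ≠ b) : TwoDisjointPathsIn H A a b := by
  classical
  obtain ⟨P, Q, hP, hQ, hPA, hQA, hPQ⟩ := hw
  obtain ⟨R, -, hRA⟩ := hA w a ⟨ha, haw.ne⟩ b ⟨hPA b P.end_mem_support, hwb.symm⟩
  obtain ⟨x, hx, seg, hseg, hsegR, hfirst⟩ :=
    R.exists_isPath_to_first_mem (S := {y | y ∈ P.support ∨ y ∈ Q.support})
      (Or.inl P.end_mem_support)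
  have hsegA (y) (hy : y ∈ seg.support) : y ∈ A \ {w} := hRA y (hsegR y hy)
  have hxw : x ≠ w := (hsegA x seg.end_mem_support).2
  wlog hxP : x ∈ P.support generalizing P Q
  · exact this Q P hQ hP hQA hPA (fun y hyQ hyP => hPQ y hyP hyQ) (Or.symm hx)
      (by simpa only [Set.mem_ofPred_eq, or_comm] using hfirst) (hx.resolve_left hxP)
  have hxb_of_mem_Q (hxQ : x ∈ Q.support) : x = b := (hPQ x hxP hxQ).resolve_left hxw
  have haQ : a ∉ Q.support := fun haQ => by
    obtain rfl := hfirst a seg.start_mem_support (Or.inr haQ)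
    exact hab (hxb_of_mem_Q haQ)
  refine ⟨seg.append (P.dropUntil x hxP), .cons haw Q,
    hseg.append (hP.dropUntil hxP) fun y hy hyP =>
      hfirst y hy (Or.inl (P.support_dropUntil_subset_support hxP hyP)),
    hQ.cons haQ, ?_, ?_, ?_⟩
  · simp only [Walk.mem_support_append_iff]
    rintro y (hy | hy)
    exacts [(hsegA y hy).1, hPA y (P.support_dropUntil_subset_support hxP hy)]
  · simp only [Walk.support_cons, List.mem_cons]
    rintro y (rfl | hy)
    exacts [ha, hQA y hy]
  · simp only [Walk.mem_support_append_iff, Walk.support_cons, List.mem_cons]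
    rintro y (hy | hy) (rfl | hyQ)
    · exact Or.inl rfl
    · obtain rfl := hfirst y hy (Or.inr hyQ)
      exact Or.inr (hxb_of_mem_Q hyQ)
    · exact Or.inl rfl
    · refine .inr <| (hPQ y (P.support_dropUntil_subset_support hxP hy) hyQ).resolve_left ?_
      rintro rfl
      exact hP.start_notMem_support_dropUntil hxP hxw hy

theorem exists_twoDisjointPathsIn (hA : ∀ x, PathConnectedIn H (A \ {x}))
    (h3 : ∀ a b, (A \ {a, b}).Nonempty) {a b : W} (ha : a ∈ A) (hb : b ∈ A) (hab : a ≠ b) :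
    TwoDisjointPathsIn H A a b := by
  obtain ⟨c, hcA, hc⟩ := h3 a b
  simp only [Set.mem_insert_iff, Set.mem_singleton_iff, not_or] at hc
  obtain ⟨r, -, hr⟩ := hA c a ⟨ha, Ne.symm hc.1⟩ b ⟨hb, Ne.symm hc.2⟩
  clear hc hcA
  induction r with
  | nil => exact absurd rfl hab
  | @cons a w b haw r ih =>
    have hwA : w ∈ A := (hr w (by simp)).1
    by_cases hwb : w = b
    · subst hwb
      exact .of_adj hA h3 ha hb haw
    · exact (ih hwA hb hwb fun y hy => hr y (by simp [hy])).cons hA ha haw hab hwb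

end Whitney

end SimpleGraph

section Monitors

variable {V : Type*} {G : SimpleGraph V}

/-- Follow the path up to its first vertex adjacent to a monitor of `M'`: every edge before it is
an edge of `G`, since virtual edges only join vertices adjacent to monitors. -/
lemma StarGraph.exists_isPath_of_walk_none {Nm M' : Set V} {v : ↥Nm}
    (p : (StarGraph G Nm M').Walk (some v) none) :
    ∃ a : ↥Nm, ∃ m ∈ M', G.Adj a m ∧ ∃ w : G.Walk v a, w.IsPath ∧
      ∀ y ∈ w.support, ∃ u : ↥Nm, (u : V) = y ∧ some u ∈ p.support := by
  classical
  suffices ∀ x z (p : (StarGraph G Nm M').Walk x z) (v : ↥Nm), z = none → x = some v →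
      ∃ a : ↥Nm, ∃ m ∈ M', G.Adj a m ∧ ∃ w : G.Walk v a,
        ∀ y ∈ w.support, ∃ u : ↥Nm, (u : V) = y ∧ some u ∈ p.support by
    obtain ⟨a, m, hm, ham, w, hw⟩ := this _ _ p v rfl rfl
    exact ⟨a, m, hm, ham, w.bypass, w.bypass_isPath,
      fun y hy => hw y (w.support_bypass_subset_support hy)⟩
  intro x z p
  induction p with
  | nil => rintro v rfl ⟨⟩
  | @cons x z _ h p ih =>
    rintro v hnone rfl
    by_cases hv : ∃ m ∈ M', G.Adj v m
    · obtain ⟨m, hm, hvm⟩ := hv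
      exact ⟨v, m, hm, hvm, .nil, by simp⟩
    · cases z with
      | none => exact absurd h hv
      | some u =>
        have hvu : G.Adj v u := h.2.resolve_right fun h' => hv h'.1
        obtain ⟨a, m, hm, ham, w, hw⟩ := ih u hnone rfl
        refine ⟨a, m, hm, ham, .cons hvu w, ?_⟩
        simp only [Walk.support_cons, List.mem_cons]
        rintro y (rfl | hy)
        · exact ⟨v, rfl, .inl rfl⟩
        · obtain ⟨u', rfl, hu'⟩ := hw y hy
          exact ⟨u', rfl, .inr hu'⟩

lemma ncard_image_some_preimage_val {N D : Set V} (hD : D ⊆ N) :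
    (some '' (Subtype.val ⁻¹' D : Set ↥N)).ncard = D.ncard := by
  rw [Set.ncard_image_of_injective _ (Option.some_injective _),
    Set.ncard_preimage_of_injective_subset_range Subtype.val_injective
      (by rwa [Subtype.range_coe])]

variable {M D : Set V} {k : ℕ} {v : V}

def MonitorFork (G : SimpleGraph V) (M D : Set V) (v m₁ m₂ : V) : Prop :=
  ∃ a b, G.Adj a m₁ ∧ G.Adj b m₂ ∧ ∃ (w₁ : G.Walk v a) (w₂ : G.Walk v b),
    w₁.IsPath ∧ w₂.IsPath ∧ (∀ y ∈ w₁.support, y ∉ M ∧ y ∉ D) ∧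
    (∀ y ∈ w₂.support, y ∉ M ∧ y ∉ D) ∧ ∀ y ∈ w₁.support, y ∈ w₂.support → y = v

lemma MonitorFork.exists_csp {m₁ m₂ : V} (hf : MonitorFork G M D v m₁ m₂) (hm₁ : m₁ ∈ M)
    (hm₂ : m₂ ∈ M) (hne : m₁ ≠ m₂) (hDM : D ⊆ Mᶜ) :
    ∃ p ∈ CSP G M, Traverses p v ∧ ∀ x ∈ D, ¬ Traverses p x := by
  obtain ⟨a, b, ha, hb, w₁, w₂, hw₁, hw₂, hw₁D, hw₂D, hdisj⟩ := hf
  have hcore : (w₁.reverse.append w₂).IsPath :=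
    hw₁.reverse.append hw₂ fun y hy => hdisj y (by simpa using hy)
  have hcoreD : ∀ y ∈ (w₁.reverse.append w₂).support, y ∉ M ∧ y ∉ D := by
    simp only [Walk.mem_support_append_iff, Walk.support_reverse, List.mem_reverse]
    rintro y (hy | hy)
    exacts [hw₁D y hy, hw₂D y hy]
  refine ⟨⟨m₁, m₂, .cons ha.symm ((w₁.reverse.append w₂).concat hb)⟩,
    ⟨hm₁, hm₂, hne, (hcore.concat (fun h => (hcoreD _ h).1 hm₂) hb).cons ?_⟩, ?_, ?_⟩
  · rw [Walk.support_concat, List.mem_append, List.mem_singleton]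
    rintro (h | h)
    exacts [(hcoreD _ h).1 hm₁, hne h]
  · simp [Traverses]
  · intro x hx
    simp only [Traverses, Walk.support_cons, Walk.support_concat, List.mem_cons,
      List.mem_append, List.not_mem_nil, or_false, not_or]
    refine ⟨?_, fun h => (hcoreD x h).2 hx, ?_⟩ <;> rintro rfl <;> exact hDM hx ‹_›

/-- A path from `v` to a vertex next to another monitor `m'` is cut at its last vertex on the
fork; the fork branch containing that vertex is redirected along it to `m'`. -/
lemma MonitorFork.reroute {m m' c : V} (hf : MonitorFork G M D v m m) (hc : G.Adj c m')
    (w : G.Walk v c) (hwD : ∀ y ∈ w.support, y ∉ M ∧ y ∉ D) : MonitorFork G M D v m m' := by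
  classical
  obtain ⟨a, b, ha, hb, w₁, w₂, hw₁, hw₂, hw₁D, hw₂D, hdisj⟩ := hf
  obtain ⟨x, hx, seg, hseg, hsegw, hfirst⟩ :=
    w.reverse.exists_isPath_to_first_mem (S := {y | y ∈ w₁.support ∨ y ∈ w₂.support})
      (Or.inl w₁.start_mem_support)
  have hsegD (y) (hy : y ∈ seg.support) : y ∉ M ∧ y ∉ D :=
    hwD y (by simpa using hsegw y hy)
  wlog hx₂ : x ∈ w₂.support generalizing a b w₁ w₂
  · exact this b a hb ha w₂ w₁ hw₂ hw₁ hw₂D hw₁D (fun y hy₂ hy₁ => hdisj y hy₁ hy₂)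
      (Or.symm hx) (by simpa only [Set.mem_ofPred_eq, or_comm] using hfirst)
      (hx.resolve_right hx₂)
  refine ⟨a, c, ha, hc, w₁, (w₂.takeUntil x hx₂).append seg.reverse, hw₁,
    (hw₂.takeUntil hx₂).append hseg.reverse fun y hy hyseg =>
      hfirst y (by simpa using hyseg) (Or.inr (w₂.support_takeUntil_subset_support hx₂ hy)),
    hw₁D, ?_, ?_⟩
  · simp only [Walk.mem_support_append_iff, Walk.support_reverse, List.mem_reverse]
    rintro y (hy | hy)
    exacts [hw₂D y (w₂.support_takeUntil_subset_support hx₂ hy), hsegD y hy]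
  · simp only [Walk.mem_support_append_iff, Walk.support_reverse, List.mem_reverse]
    rintro y hy₁ (hy | hy)
    · exact hdisj y hy₁ (w₂.support_takeUntil_subset_support hx₂ hy)
    · obtain rfl := hfirst y hy (Or.inl hy₁)
      exact hdisj y hy₁ hx₂

lemma exists_monitorFork (h1 : KConnected (StarGraph G Mᶜ M) (k + 2)) (hDM : D ⊆ Mᶜ)
    (hDk : D.ncard ≤ k) (hv : v ∉ M) (hvD : v ∉ D) :
    ∃ m₁ ∈ M, ∃ m₂ ∈ M, MonitorFork G M D v m₁ m₂ := by
  set D' : Set (Option ↥Mᶜ) := some '' (Subtype.val ⁻¹' D)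
  have hD' : D'.ncard ≤ k := (ncard_image_some_preimage_val hDM).trans_le hDk
  have h2conn (x) : PathConnectedIn (StarGraph G Mᶜ M) (D'ᶜ \ {x}) := by
    rw [Set.sdiff_eq, ← Set.compl_union]
    exact h1.pathConnectedIn_compl ((Set.ncard_union_le _ _).trans_lt (by simp; omega))
  have h3 (a b) : (D'ᶜ \ {a, b}).Nonempty := by
    rw [Set.sdiff_eq, ← Set.compl_union, Set.nonempty_compl]
    intro h
    have := (Set.ncard_union_le D' {a, b}).trans (add_le_add hD'
      ((Set.ncard_insert_le a {b}).trans_eq (by rw [Set.ncard_singleton])))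
    rw [h, Set.ncard_univ] at this
    exact absurd h1.1 this.not_gt
  obtain ⟨P, Q, -, -, hPA, hQA, hPQ⟩ := exists_twoDisjointPathsIn h2conn h3
    (a := some ⟨v, hv⟩) (b := none) (by simpa [D'] using hvD) (by simp [D']) (by simp)
  obtain ⟨a, m₁, hm₁, ha, w₁, hw₁, hw₁P⟩ := StarGraph.exists_isPath_of_walk_none P
  obtain ⟨b, m₂, hm₂, hb, w₂, hw₂, hw₂Q⟩ := StarGraph.exists_isPath_of_walk_none Q
  refine ⟨m₁, hm₁, m₂, hm₂, a, b, ha, hb, w₁, w₂, hw₁, hw₂, fun y hy => ?_, fun y hy => ?_, ?_⟩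
  · obtain ⟨u, rfl, hu⟩ := hw₁P y hy
    exact ⟨u.2, by simpa [D'] using hPA _ hu⟩
  · obtain ⟨u, rfl, hu⟩ := hw₂Q y hy
    exact ⟨u.2, by simpa [D'] using hQA _ hu⟩
  · intro y hy₁ hy₂
    obtain ⟨u, rfl, hu⟩ := hw₁P y hy₁
    obtain ⟨u', hu'u, hu'⟩ := hw₂Q _ hy₂
    obtain rfl := Subtype.ext hu'u
    simpa [Subtype.ext_iff] using hPQ _ hu hu'

lemma exists_walk_to_monitor {M' : Set V} (h : KConnected (StarGraph G Mᶜ M') (k + 1))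
    (hDM : D ⊆ Mᶜ) (hDk : D.ncard ≤ k) (hv : v ∉ M) (hvD : v ∉ D) :
    ∃ c, ∃ m ∈ M', G.Adj c m ∧ ∃ w : G.Walk v c, ∀ y ∈ w.support, y ∉ M ∧ y ∉ D := by
  set D' : Set (Option ↥Mᶜ) := some '' (Subtype.val ⁻¹' D)
  obtain ⟨p, -, hpD⟩ := h.pathConnectedIn_compl
    (by rw [ncard_image_some_preimage_val hDM]; omega) (some ⟨v, hv⟩) (by simpa [D'] using hvD)
    none (by simp)
  obtain ⟨c, m, hm, hc, w, -, hwp⟩ := StarGraph.exists_isPath_of_walk_none p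
  refine ⟨c, m, hm, hc, w, fun y hy => ?_⟩
  obtain ⟨u, rfl, hu⟩ := hwp y hy
  exact ⟨u.2, by simpa [D'] using hpD _ hu⟩

theorem exists_csp_traverses_avoiding (h1 : KConnected (StarGraph G Mᶜ M) (k + 2))
    (h2 : ∀ m ∈ M, KConnected (StarGraph G Mᶜ (M \ {m})) (k + 1)) (hDM : D ⊆ Mᶜ)
    (hDk : D.ncard ≤ k) (hv : v ∉ M) (hvD : v ∉ D) :
    ∃ p ∈ CSP G M, Traverses p v ∧ ∀ x ∈ D, ¬ Traverses p x := by
  obtain ⟨m₁, hm₁, m₂, hm₂, hf⟩ := exists_monitorFork h1 hDM hDk hv hvD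
  rcases ne_or_eq m₁ m₂ with hne | rfl
  · exact hf.exists_csp hm₁ hm₂ hne hDM
  · obtain ⟨c, m₃, ⟨hm₃, hm₃₁⟩, hc, w, hwD⟩ := exists_walk_to_monitor (h2 m₁ hm₁) hDM hDk hv hvD
    exact (hf.reroute hc w hwD).exists_csp hm₁ hm₃ (Ne.symm hm₃₁) hDM

end Monitors

theorem stmt_16_general {V : Type*} (G : SimpleGraph V)
    (M : Set V) (k : ℕ)
    (h1 : KConnected (StarGraph G Mᶜ M) (k + 2))
    (h2 : ∀ m ∈ M, KConnected (StarGraph G Mᶜ (M \ {m})) (k + 1)) :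
    Identifiable (CSP G M) Mᶜ k := by
  intro F F' hF hF' hFk hF'k hne
  obtain ⟨v, hv⟩ := Set.symmDiff_nonempty.mpr hne
  rcases Set.mem_symmDiff.mp hv with ⟨hvF, hvF'⟩ | ⟨hvF', hvF⟩
  · obtain ⟨p, hp, hpv, hpF'⟩ := exists_csp_traverses_avoiding h1 h2 hF' hF'k (hF hvF) hvF'
    exact .inl ⟨p, hp, ⟨v, hvF, hpv⟩, hpF'⟩
  · obtain ⟨p, hp, hpv, hpF⟩ := exists_csp_traverses_avoiding h1 h2 hF hFk (hF' hvF') hvF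
    exact .inr ⟨p, hp, ⟨v, hvF', hpv⟩, hpF⟩

/-- If `k ≤ σ − 2`, the auxiliary graph `G*` is `(k+2)`-vertex-connected, and
`G_m` is `(k+1)`-vertex-connected for every monitor `m`, then `G` is
`k`-identifiable under CSP. -/
theorem stmt_16 {V : Type*} [Fintype V] (G : SimpleGraph V) (hG : G.Connected)
    (M : Set V) (hM : M.Nonempty) (k : ℕ) (hk : k + 2 ≤ Mᶜ.ncard)
    (h1 : KConnected (StarGraph G Mᶜ M) (k + 2))
    (h2 : ∀ m ∈ M, KConnected (StarGraph G Mᶜ (M \ {m})) (k + 1)) :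
    Identifiable (CSP G M) Mᶜ k :=
  stmt_16_general G M k h1 h2
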